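/- arXiv:1301.6194 — 2 statements merged into one kernel-verified Lean document; each statement's English description precedes it below -/
import Mathlib

section
/- Let z ∈ ℝ^{2n} be any configuration of n point vortices with distinct positions. Then the Hessian matrix of the Hamiltonian anti-commutes with K: D²H(z) K = −K D²H(z). -/
noncomputable section

open Finset Polynomial

abbrev Idx (n : ℕ) := Fin n × Fin 2

/-- The Hamiltonian of the planar `n`-vortex problem. -/
def vortexH (n : ℕ) (Γ : Fin n → ℝ) (z : Idx n → ℝ) : ℝ :=
  -∑ i : Fin n, ∑ j ∈ Finset.Ioi i, Γ i * Γ j *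
    Real.log (Real.sqrt ((z (i, 0) - z (j, 0)) ^ 2 + (z (i, 1) - z (j, 1)) ^ 2))

/-- The total vortex angular momentum `L = ∑_{i<j} Γᵢ Γⱼ`. -/
def vortexL (n : ℕ) (Γ : Fin n → ℝ) : ℝ :=
  ∑ i : Fin n, ∑ j ∈ Finset.Ioi i, Γ i * Γ j

/-- The gradient of the Hamiltonian (vector of partial derivatives). -/
def gradH (n : ℕ) (Γ : Fin n → ℝ) (z : Idx n → ℝ) : Idx n → ℝ := fun a =>
  fderiv ℝ (vortexH n Γ) z (Pi.single a 1)

/-- The Hessian matrix `D²H(z)` of second partial derivatives. -/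
def D2H (n : ℕ) (Γ : Fin n → ℝ) (z : Idx n → ℝ) : Matrix (Idx n) (Idx n) ℝ :=
  Matrix.of fun a b =>
    fderiv ℝ (fun w => fderiv ℝ (vortexH n Γ) w (Pi.single b 1)) z (Pi.single a 1)

/-- The block-diagonal rotation matrix `K` with `n` copies of `J = [[0,1],[-1,0]]`. -/
def Kmat (n : ℕ) : Matrix (Idx n) (Idx n) ℝ :=
  Matrix.of fun a b => if a.1 = b.1 then !![0, 1; -1, 0] a.2 b.2 else 0

/-- The diagonal matrix `M = diag(Γ₁,Γ₁,…,Γₙ,Γₙ)` of circulations. -/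
def Mmat (n : ℕ) (Γ : Fin n → ℝ) : Matrix (Idx n) (Idx n) ℝ :=
  Matrix.diagonal fun a => Γ a.1

/-- The vortex positions are pairwise distinct. -/
def Distinct (n : ℕ) (z : Idx n → ℝ) : Prop :=
  ∀ i j : Fin n, i ≠ j → (z (i, 0), z (i, 1)) ≠ (z (j, 0), z (j, 1))

/-- The angular impulse `I(z) = (1/2) ∑ᵢ Γᵢ ‖zᵢ‖²`. -/
def angImpulse (n : ℕ) (Γ : Fin n → ℝ) (z : Idx n → ℝ) : ℝ :=
  (1 / 2) * ∑ i : Fin n, Γ i * ((z (i, 0)) ^ 2 + (z (i, 1)) ^ 2)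

/-- `z₀` is a relative equilibrium with angular velocity `ω ≠ 0`:
`∇H(z₀) + ω M z₀ = 0`. -/
def IsRelEq (n : ℕ) (Γ : Fin n → ℝ) (z₀ : Idx n → ℝ) (ω : ℝ) : Prop :=
  Distinct n z₀ ∧ ω ≠ 0 ∧ gradH n Γ z₀ + ω • (Mmat n Γ).mulVec z₀ = 0

/-- The stability matrix `B = K (M⁻¹ D²H(z₀) + ω Id)`. -/
def Bmat (n : ℕ) (Γ : Fin n → ℝ) (z₀ : Idx n → ℝ) (ω : ℝ) : Matrix (Idx n) (Idx n) ℝ :=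
  Kmat n * ((Mmat n Γ)⁻¹ * D2H n Γ z₀ + ω • (1 : Matrix (Idx n) (Idx n) ℝ))

/-- The multiset of (complex) eigenvalues of the stability matrix `B`, with multiplicity. -/
def specB (n : ℕ) (Γ : Fin n → ℝ) (z₀ : Idx n → ℝ) (ω : ℝ) : Multiset ℂ :=
  (((Bmat n Γ z₀ ω).map Complex.ofReal).charpoly).roots

/-- The trivial eigenvalues `0, 0, ωi, -ωi` of the stability matrix. -/
def trivialEvs (ω : ℝ) : Multiset ℂ := {0, 0, (ω : ℂ) * Complex.I, -((ω : ℂ) * Complex.I)}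

/-- `V = span{z₀, Kz₀}`. -/
def Vspan (n : ℕ) (z₀ : Idx n → ℝ) : Submodule ℝ (Idx n → ℝ) :=
  Submodule.span ℝ {z₀, (Kmat n).mulVec z₀}

/-- The `M`-orthogonal complement `V^⊥` of `V = span{z₀, Kz₀}` (over ℝ). -/
def VperpR (n : ℕ) (Γ : Fin n → ℝ) (z₀ : Idx n → ℝ) : Submodule ℝ (Idx n → ℝ) :=
  LinearMap.ker (Matrix.mulVecLin (Matrix.of
    ![(Mmat n Γ).mulVec z₀, (Mmat n Γ).mulVec ((Kmat n).mulVec z₀)]))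

/-- The complexification of `V^⊥`. -/
def VperpC (n : ℕ) (Γ : Fin n → ℝ) (z₀ : Idx n → ℝ) : Submodule ℂ (Idx n → ℂ) :=
  LinearMap.ker (Matrix.mulVecLin (Matrix.of
    ![fun a => ((Mmat n Γ).mulVec z₀ a : ℂ),
      fun a => ((Mmat n Γ).mulVec ((Kmat n).mulVec z₀) a : ℂ)]))

/-- The complexified stability matrix as a linear map on `ℂ^{2n}`. -/
def BC (n : ℕ) (Γ : Fin n → ℝ) (z₀ : Idx n → ℝ) (ω : ℝ) : (Idx n → ℂ) →ₗ[ℂ] (Idx n → ℂ) :=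
  Matrix.mulVecLin ((Bmat n Γ z₀ ω).map Complex.ofReal)

/-- `z₀` is linearly stable: the `2n - 4` nontrivial eigenvalues of `B` are nonzero and purely
imaginary, and the restriction of `B` to `V^⊥` is diagonalizable over `ℂ`. -/
def IsLinearlyStable (n : ℕ) (Γ : Fin n → ℝ) (z₀ : Idx n → ℝ) (ω : ℝ) : Prop :=
  (∃ ν : Multiset ℂ, specB n Γ z₀ ω = trivialEvs ω + ν ∧ ∀ μ ∈ ν, μ ≠ 0 ∧ μ.re = 0) ∧
  ∃ h : ∀ w ∈ VperpC n Γ z₀, BC n Γ z₀ ω w ∈ VperpC n Γ z₀,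
    (⨆ μ : ℂ, Module.End.eigenspace ((BC n Γ z₀ ω).restrict h) μ) = ⊤

/-- `z₀` is spectrally stable: nontrivial eigenvalues are nonzero and purely imaginary. -/
def IsSpectrallyStable (n : ℕ) (Γ : Fin n → ℝ) (z₀ : Idx n → ℝ) (ω : ℝ) : Prop :=
  ∃ ν : Multiset ℂ, specB n Γ z₀ ω = trivialEvs ω + ν ∧ ∀ μ ∈ ν, μ ≠ 0 ∧ μ.re = 0

/-- `z₀` is degenerate: some nontrivial eigenvalue of `B` is zero. -/
def IsDegenerate (n : ℕ) (Γ : Fin n → ℝ) (z₀ : Idx n → ℝ) (ω : ℝ) : Prop :=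
  ∃ ν : Multiset ℂ, specB n Γ z₀ ω = trivialEvs ω + ν ∧ 0 ∈ ν

/-- `z₀` is unstable: some nontrivial eigenvalue of `B` has nonzero real part. -/
def IsUnstable (n : ℕ) (Γ : Fin n → ℝ) (z₀ : Idx n → ℝ) (ω : ℝ) : Prop :=
  ∃ ν : Multiset ℂ, specB n Γ z₀ ω = trivialEvs ω + ν ∧ ∃ μ ∈ ν, μ.re ≠ 0

/-- Rotation `e^{Jθ}` applied to each vortex of the configuration `z`. -/
def rotConf (n : ℕ) (θ : ℝ) (z : Idx n → ℝ) : Idx n → ℝ := fun a =>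
  if a.2 = 0 then Real.cos θ * z (a.1, 0) + Real.sin θ * z (a.1, 1)
  else -Real.sin θ * z (a.1, 0) + Real.cos θ * z (a.1, 1)

/-- The Euclidean norm on `ℝ^{2n}`. -/
def enorm2 (n : ℕ) (v : Idx n → ℝ) : ℝ := Real.sqrt (∑ a : Idx n, (v a) ^ 2)

/-!
`H` is a sum of terms `-ΓₖΓₗ log ‖zₖ - zₗ‖`, so
`D²H(z) = -∑_{k<l} ΓₖΓₗ (dₖₗ dₖₗᵀ) ⊗ S(zₖ - zₗ)` with `dₖₗ = eₖ - eₗ` and `S(a)` the Hessian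
of `x ↦ log ‖x‖` on `ℝ²` at `a`. That function is harmonic, so `S(a)` is symmetric and
traceless, hence anticommutes with `J`; and `K = 1 ⊗ J`, so every Kronecker term anticommutes
with `K`.
-/

open Matrix
open scoped Kronecker

theorem HasFDerivAt.dotProduct {𝕜 E ι : Type*} [NontriviallyNormedField 𝕜]
    [NormedAddCommGroup E] [NormedSpace 𝕜 E] [Fintype ι] {f g : E → ι → 𝕜}
    {f' g' : E →L[𝕜] ι → 𝕜} {x : E} (hf : HasFDerivAt f f' x) (hg : HasFDerivAt g g' x) :
    HasFDerivAt (fun y => f y ⬝ᵥ g y)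
      (∑ i, (f x i • (ContinuousLinearMap.proj i ∘L g') +
        g x i • (ContinuousLinearMap.proj i ∘L f'))) x :=
  HasFDerivAt.fun_sum fun i _ => (hasFDerivAt_pi'.1 hf i).mul (hasFDerivAt_pi'.1 hg i)

theorem kronecker_mul_one_kronecker_of_anticomm {m ι R : Type*} [Fintype m] [DecidableEq m]
    [Fintype ι] [CommRing R] (A : Matrix m m R) {B J : Matrix ι ι R} (h : B * J = -(J * B)) :
    (A ⊗ₖ B) * (1 ⊗ₖ J) = -((1 ⊗ₖ J) * (A ⊗ₖ B)) := by
  rw [← mul_kronecker_mul, ← mul_kronecker_mul, h, mul_one, one_mul]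
  ext
  simp

theorem Matrix.IsSymm.mul_J_eq_neg_J_mul {R : Type*} [CommRing R]
    {S : Matrix (Fin 2) (Fin 2) R} (hS : S.IsSymm) (htr : S.trace = 0) :
    S * !![0, 1; -1, 0] = -(!![0, 1; -1, 0] * S) := by
  have h11 : S 1 1 = -S 0 0 := eq_neg_of_add_eq_zero_right ((trace_fin_two S).symm.trans htr)
  rw [eta_fin_two S, mul_fin_two, mul_fin_two, hS.apply 0 1, h11]
  ext i j
  fin_cases i <;> fin_cases j <;> simp

def hessianLogNorm (a : Fin 2 → ℝ) : Matrix (Fin 2) (Fin 2) ℝ :=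
  (a ⬝ᵥ a)⁻¹ • 1 - (2 / (a ⬝ᵥ a) ^ 2) • vecMulVec a a

theorem isSymm_hessianLogNorm (a : Fin 2 → ℝ) : (hessianLogNorm a).IsSymm :=
  (isSymm_one.smul _).sub (IsSymm.smul (transpose_vecMulVec a a) _)

theorem trace_hessianLogNorm (a : Fin 2 → ℝ) : (hessianLogNorm a).trace = 0 := by
  rw [hessianLogNorm, trace_sub, trace_smul, trace_smul, trace_one, trace_vecMulVec]
  simp only [Fintype.card_fin, Nat.cast_ofNat, smul_eq_mul]
  grind

theorem dotProduct_hessianLogNorm_mulVec (a x y : Fin 2 → ℝ) :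
    x ⬝ᵥ hessianLogNorm a *ᵥ y =
      (x ⬝ᵥ y) / (a ⬝ᵥ a) - 2 * (a ⬝ᵥ x) * (a ⬝ᵥ y) / (a ⬝ᵥ a) ^ 2 := by
  simp only [hessianLogNorm, sub_mulVec, smul_mulVec, one_mulVec, vecMulVec_mulVec,
    dotProduct_sub, dotProduct_smul, smul_eq_mul, MulOpposite.smul_eq_mul_unop,
    MulOpposite.unop_op, dotProduct_comm x a]
  ring

theorem Kmat_eq_one_kronecker (n : ℕ) :
    Kmat n = (1 : Matrix (Fin n) (Fin n) ℝ) ⊗ₖ !![0, 1; -1, 0] := by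
  ext ⟨i, s⟩ ⟨j, t⟩
  by_cases h : i = j <;> simp [Kmat, one_apply, h]

section Vortex

variable {n : ℕ}

def pairDiff (k l : Fin n) : (Idx n → ℝ) →L[ℝ] (Fin 2 → ℝ) :=
  .pi fun s => .proj (k, s) - .proj (l, s)

@[simp]
theorem pairDiff_apply (k l : Fin n) (w : Idx n → ℝ) (s : Fin 2) :
    pairDiff k l w s = w (k, s) - w (l, s) := rfl

theorem pairDiff_single (k l i : Fin n) (s : Fin 2) :
    pairDiff k l (Pi.single (i, s) 1) =
      (Pi.single k 1 - Pi.single l 1 : Fin n → ℝ) i • Pi.single s 1 := by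
  ext t
  by_cases ht : t = s <;> by_cases hk : k = i <;> by_cases hl : l = i <;> simp [ht, hk, hl]

theorem Distinct.pairDiff_dotProduct_self_ne_zero {z : Idx n → ℝ} (hz : Distinct n z)
    {k l : Fin n} (hkl : k ≠ l) : pairDiff k l z ⬝ᵥ pairDiff k l z ≠ 0 := by
  rw [Ne, dotProduct_self_eq_zero]
  intro h
  refine hz k l hkl (Prod.ext ?_ ?_)
  · simpa [sub_eq_zero] using congrFun h 0
  · simpa [sub_eq_zero] using congrFun h 1

theorem Distinct.eventually_nhds {z : Idx n → ℝ} (hz : Distinct n z) :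
    ∀ᶠ w in nhds z, Distinct n w := by
  simp only [Distinct, Filter.eventually_all]
  intro k l hkl
  have hc : ∀ i : Fin n, Continuous fun w : Idx n → ℝ => (w (i, 0), w (i, 1)) := by
    intro i
    fun_prop
  exact ((hc k).continuousAt.ne_iff_eventually_ne (hc l).continuousAt).1 (hz k l hkl)

theorem vortexH_eq_sum_log (Γ : Fin n → ℝ) :
    vortexH n Γ = fun w => -∑ k, ∑ l ∈ Ioi k,
      Γ k * Γ l / 2 * Real.log (pairDiff k l w ⬝ᵥ pairDiff k l w) := by
  ext w
  refine congrArg Neg.neg (sum_congr rfl fun k _ => sum_congr rfl fun l _ => ?_)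
  rw [Real.log_sqrt (by positivity)]
  simp only [dotProduct, Fin.sum_univ_two, pairDiff_apply, ← sq]
  ring

theorem fderiv_vortexH_apply (Γ : Fin n → ℝ) {w : Idx n → ℝ} (hw : Distinct n w)
    (v : Idx n → ℝ) :
    fderiv ℝ (vortexH n Γ) w v = -∑ k, ∑ l ∈ Ioi k, Γ k * Γ l *
      ((pairDiff k l w ⬝ᵥ pairDiff k l v) / (pairDiff k l w ⬝ᵥ pairDiff k l w)) := by
  have hH := (HasFDerivAt.fun_sum (u := univ) fun k _ => HasFDerivAt.fun_sum
    fun l (hl : l ∈ Ioi k) =>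
      (((pairDiff k l).hasFDerivAt.dotProduct (pairDiff k l).hasFDerivAt).log
        (hw.pairDiff_dotProduct_self_ne_zero (mem_Ioi.1 hl).ne)).const_mul
        (Γ k * Γ l / 2)).fun_neg
  rw [vortexH_eq_sum_log, hH.fderiv]
  simp only [_root_.neg_apply, _root_.sum_apply, _root_.smul_apply, _root_.add_apply,
    ContinuousLinearMap.comp_apply, ContinuousLinearMap.proj_apply, smul_eq_mul]
  refine congrArg Neg.neg (sum_congr rfl fun k _ => sum_congr rfl fun l _ => ?_)
  simp only [dotProduct, Fin.sum_univ_two]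
  ring

theorem fderiv_fderiv_vortexH_apply (Γ : Fin n → ℝ) {z : Idx n → ℝ} (hz : Distinct n z)
    (u v : Idx n → ℝ) :
    fderiv ℝ (fun w => fderiv ℝ (vortexH n Γ) w v) z u = -∑ k, ∑ l ∈ Ioi k, Γ k * Γ l *
      (pairDiff k l u ⬝ᵥ hessianLogNorm (pairDiff k l z) *ᵥ pairDiff k l v) := by
  have hG := (HasFDerivAt.fun_sum (u := univ) fun k _ => HasFDerivAt.fun_sum
    fun l (hl : l ∈ Ioi k) =>
      (((pairDiff k l).hasFDerivAt.dotProduct (hasFDerivAt_const (pairDiff k l v) z)).mul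
        ((hasDerivAt_inv (hz.pairDiff_dotProduct_self_ne_zero (mem_Ioi.1 hl).ne)).comp_hasFDerivAt
          z ((pairDiff k l).hasFDerivAt.dotProduct (pairDiff k l).hasFDerivAt))).const_mul
        (Γ k * Γ l)).fun_neg
  rw [(hG.congr_of_eventuallyEq ?_).fderiv]
  · simp only [_root_.neg_apply, _root_.sum_apply, _root_.smul_apply, _root_.add_apply,
      ContinuousLinearMap.comp_apply, ContinuousLinearMap.proj_apply, smul_eq_mul]
    refine congrArg Neg.neg (sum_congr rfl fun k _ => sum_congr rfl fun l hl => ?_)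
    have hq := hz.pairDiff_dotProduct_self_ne_zero (mem_Ioi.1 hl).ne
    rw [dotProduct_hessianLogNorm_mulVec]
    simp only [Function.comp_apply, _root_.zero_apply, Pi.zero_apply, mul_zero, zero_add]
    field_simp
    simp only [dotProduct, Fin.sum_univ_two]
    ring
  · filter_upwards [hz.eventually_nhds] with w hw
    rw [fderiv_vortexH_apply Γ hw]
    simp [div_eq_mul_inv]

theorem D2H_eq_sum_kronecker (Γ : Fin n → ℝ) {z : Idx n → ℝ} (hz : Distinct n z) :
    D2H n Γ z = ∑ k, ∑ l ∈ Ioi k, (-(Γ k * Γ l)) •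
      (vecMulVec (Pi.single k 1 - Pi.single l 1) (Pi.single k 1 - Pi.single l 1) ⊗ₖ
        hessianLogNorm (pairDiff k l z)) := by
  ext ⟨i, s⟩ ⟨j, t⟩
  rw [D2H, Matrix.of_apply, fderiv_fderiv_vortexH_apply Γ hz]
  simp only [pairDiff_single, Matrix.sum_apply, Matrix.smul_apply, kronecker_apply,
    vecMulVec_apply, mulVec_smul, dotProduct_smul, smul_dotProduct, single_one_dotProduct,
    mulVec_single_one, col_apply, smul_eq_mul, ← sum_neg_distrib]
  refine sum_congr rfl fun k _ => sum_congr rfl fun l _ => ?_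
  ring

end Vortex

theorem hessian_anticommutes_K_general (n : ℕ) (Γ : Fin n → ℝ) (z : Idx n → ℝ) (hz : Distinct n z) :
    D2H n Γ z * Kmat n = -(Kmat n * D2H n Γ z) := by
  rw [D2H_eq_sum_kronecker Γ hz, Kmat_eq_one_kronecker, sum_mul, mul_sum, ← sum_neg_distrib]
  refine sum_congr rfl fun k _ => ?_
  rw [sum_mul, mul_sum, ← sum_neg_distrib]
  refine sum_congr rfl fun l _ => ?_
  rw [smul_mul_assoc, mul_smul_comm,
    kronecker_mul_one_kronecker_of_anticomm _
      ((isSymm_hessianLogNorm _).mul_J_eq_neg_J_mul (trace_hessianLogNorm _)), smul_neg]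

/-- The Hessian of the Hamiltonian anti-commutes with `K`:
`D²H(z) K = -K D²H(z)`. -/
theorem hessian_anticommutes_K (n : ℕ) (hn : 2 ≤ n) (Γ : Fin n → ℝ)
    (hΓ : ∀ i, Γ i ≠ 0) (z : Idx n → ℝ) (hz : Distinct n z) :
    D2H n Γ z * Kmat n = -(Kmat n * D2H n Γ z) :=
  hessian_anticommutes_K_general n Γ z hz
end
end

section
/- Let z ∈ ℝ^{2n} be any configuration of n point vortices with distinct positions. Then the characteristic polynomials of the matrices D²H(z) and M⁻¹D²H(z) are even polynomials: if q(λ) denotes either characteristic polynomial, then q(λ) = q(−λ) for all λ. -/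
noncomputable section

open Finset Polynomial

/-!
Each term of `H` is `Γᵢ Γⱼ log ‖zᵢ - zⱼ‖`, the harmonic function `log ‖·‖` on `ℂ ≅ ℝ²` composed
with the linear map `z ↦ zᵢ - zⱼ`. The Hessian of a harmonic function of two variables is
symmetric and trace-free, so it changes sign when both arguments are rotated by `i`. The block
rotation `K = diag(J, …, J)` rotates every difference `zᵢ - zⱼ` in this way, hence the Hessian
form `B` of `H` satisfies `B (K u) (K v) = -B u v`, i.e. `K D²H K = D²H`. Since `K² = -1`, this
makes `D²H` similar to `-D²H`; the same holds for `M⁻¹ D²H` because `M` commutes with `K`. In the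
even dimension `2n` both characteristic polynomials are therefore even.
-/

namespace Matrix

variable {m R : Type*} [Fintype m] [DecidableEq m] [CommRing R]

theorem charpoly_eval_neg_of_mul_mul_eq (hm : Even (Fintype.card m)) {K A : Matrix m m R}
    (hK : K * K = -1) (hKAK : K * A * K = A) (x : R) :
    A.charpoly.eval (-x) = A.charpoly.eval x := by
  have hconj : K * (scalar m x - A) * K = scalar m (-x) - A := by
    rw [mul_sub, sub_mul, hKAK, ← (scalar_commute x (fun _ => mul_comm _ _) K).eq, mul_assoc, hK]
    simp
  rw [eval_charpoly, eval_charpoly, ← hconj, det_mul, det_mul, mul_right_comm, ← det_mul, hK,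
    det_neg, det_one, mul_one, hm.neg_one_pow, one_mul]

theorem commute_inv_right {K M : Matrix m m R} (hK : IsUnit K) (h : Commute K M) :
    Commute K M⁻¹ := by
  have hdet : IsUnit K.det := (isUnit_iff_isUnit_det K).mp hK
  have hinv : M⁻¹ * K⁻¹ = K⁻¹ * M⁻¹ := by rw [← mul_inv_rev, ← mul_inv_rev, h.eq]
  calc K * M⁻¹ = K * (M⁻¹ * K⁻¹) * K := by
        rw [mul_assoc, mul_assoc, nonsing_inv_mul K hdet, mul_one]
    _ = M⁻¹ * K := by rw [hinv, ← mul_assoc, mul_nonsing_inv K hdet, one_mul]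

end Matrix

section SecondDerivative

variable {𝕜 E F G : Type*} [NontriviallyNormedField 𝕜] [NormedAddCommGroup E] [NormedSpace 𝕜 E]
  [NormedAddCommGroup F] [NormedSpace 𝕜 F] [NormedAddCommGroup G] [NormedSpace 𝕜 G]

theorem ContDiffAt.iteratedFDeriv_comp_continuousLinearMap {f : E → F} (g : G →L[𝕜] E) {x : G}
    {i : ℕ} (hf : ContDiffAt 𝕜 i f (g x)) :
    iteratedFDeriv 𝕜 i (f ∘ g) x =
      (iteratedFDeriv 𝕜 i f (g x)).compContinuousLinearMap fun _ => g := by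
  obtain ⟨u, hu, hfu⟩ := hf.contDiffOn le_rfl (by simp)
  obtain ⟨s, hsu, hs, hxs⟩ := mem_nhds_iff.mp hu
  have hs' : IsOpen (g ⁻¹' s) := hs.preimage g.continuous
  rw [← iteratedFDerivWithin_of_isOpen i hs' hxs, ← iteratedFDerivWithin_of_isOpen i hs hxs]
  exact g.iteratedFDerivWithin_comp_right (hfu.mono hsu) hs.uniqueDiffOn hs'.uniqueDiffOn hxs le_rfl

theorem fderiv_fderiv_apply_of_differentiableAt {f : E → F} {x : E}
    (hf : DifferentiableAt 𝕜 (fderiv 𝕜 f) x) (u v : E) :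
    fderiv 𝕜 (fun y => fderiv 𝕜 f y v) x u = fderiv 𝕜 (fderiv 𝕜 f) x u v := by
  rw [fderiv_clm_apply hf (differentiableAt_const v)]
  simp

end SecondDerivative

open Complex InnerProductSpace

theorem InnerProductSpace.HarmonicAt.fderiv_fderiv_I_mul {F : Type*} [NormedAddCommGroup F]
    [NormedSpace ℝ F] {f : ℂ → F} {x : ℂ} (hf : HarmonicAt f x) (p q : ℂ) :
    fderiv ℝ (fderiv ℝ f) x (I * p) (I * q) = -fderiv ℝ (fderiv ℝ f) x p q := by
  set B := fderiv ℝ (fderiv ℝ f) x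
  have hsymm : B 1 I = B I 1 := hf.1.isSymmSndFDerivAt (by simp) 1 I
  have hlap : B 1 1 + B I I = 0 := by
    have := congrFun (laplacian_eq_iteratedFDeriv_complexPlane f) x
    rw [hf.2.eq_of_nhds, iteratedFDeriv_two_apply, iteratedFDeriv_two_apply] at this
    simpa using this.symm
  have hdecomp (w : ℂ) : w = w.re • (1 : ℂ) + w.im • I := by simp
  have hrot (a b : ℝ) : I * (a • (1 : ℂ) + b • I) = (-b) • (1 : ℂ) + a • I := by
    simp [Complex.ext_iff]
  obtain ⟨a, b, rfl⟩ : ∃ a b : ℝ, p = a • (1 : ℂ) + b • I := ⟨_, _, hdecomp p⟩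
  obtain ⟨c, d, rfl⟩ : ∃ c d : ℝ, q = c • (1 : ℂ) + d • I := ⟨_, _, hdecomp q⟩
  simp only [hrot, map_add, map_smul, _root_.add_apply, _root_.smul_apply, hsymm]
  linear_combination (norm := module) (a * c + b * d) • hlap

section Vortex

variable {n : ℕ}

def coordDiff (i j : Fin n) (γ : Fin 2) : (Idx n → ℝ) →L[ℝ] ℝ :=
  .proj (i, γ) - .proj (j, γ)

def relPos (i j : Fin n) : (Idx n → ℝ) →L[ℝ] ℂ :=
  (coordDiff i j 0).smulRight 1 + (coordDiff i j 1).smulRight I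

theorem relPos_apply (i j : Fin n) (w : Idx n → ℝ) :
    relPos i j w = ⟨w (i, 0) - w (j, 0), w (i, 1) - w (j, 1)⟩ := by
  apply Complex.ext <;> simp [relPos, coordDiff]

theorem relPos_ne_zero {z : Idx n → ℝ} (hz : Distinct n z) {i j : Fin n} (hij : i ≠ j) :
    relPos i j z ≠ 0 := by
  intro h
  apply hz i j hij
  simp only [relPos_apply, Complex.ext_iff, zero_re, zero_im, sub_eq_zero] at h
  rw [h.1, h.2]

theorem vortexH_eq_sum (Γ : Fin n → ℝ) :
    vortexH n Γ = -fun w => ∑ i, ∑ j ∈ Ioi i, Γ i * Γ j * Real.log ‖relPos i j w‖ := by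
  funext w
  simp [vortexH, relPos_apply, Complex.norm_def, Complex.normSq_apply, sq]

theorem harmonicAt_log_norm_relPos {z : Idx n → ℝ} (hz : Distinct n z) {i j : Fin n}
    (hij : i ≠ j) : HarmonicAt (fun v : ℂ => Real.log ‖v‖) (relPos i j z) :=
  analyticAt_id.harmonicAt_log_norm (relPos_ne_zero hz hij)

theorem contDiffAt_log_norm_relPos {z : Idx n → ℝ} (hz : Distinct n z) {i j : Fin n}
    (hij : i ≠ j) : ContDiffAt ℝ 2 ((fun v : ℂ => Real.log ‖v‖) ∘ relPos i j) z :=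
  (harmonicAt_log_norm_relPos hz hij).1.comp z (relPos i j).contDiff.contDiffAt

theorem contDiffAt_vortexH (Γ : Fin n → ℝ) {z : Idx n → ℝ} (hz : Distinct n z) :
    ContDiffAt ℝ 2 (vortexH n Γ) z := by
  rw [vortexH_eq_sum]
  exact (ContDiffAt.sum fun i _ => ContDiffAt.sum fun j hj =>
    (contDiffAt_log_norm_relPos hz (mem_Ioi.mp hj).ne).const_smul (Γ i * Γ j)).neg

theorem iteratedFDeriv_vortexH (Γ : Fin n → ℝ) {z : Idx n → ℝ} (hz : Distinct n z) :
    iteratedFDeriv ℝ 2 (vortexH n Γ) z = -∑ i, ∑ j ∈ Ioi i, (Γ i * Γ j) •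
      (iteratedFDeriv ℝ 2 (fun v : ℂ => Real.log ‖v‖) (relPos i j z)).compContinuousLinearMap
        fun _ => relPos i j := by
  have hterm (i : Fin n) {j : Fin n} (hj : j ∈ Ioi i) :
      ContDiffAt ℝ 2 (fun w => Γ i * Γ j * Real.log ‖relPos i j w‖) z :=
    (contDiffAt_log_norm_relPos hz (mem_Ioi.mp hj).ne).const_smul (Γ i * Γ j)
  rw [vortexH_eq_sum, iteratedFDeriv_neg_apply,
    iteratedFDeriv_fun_sum_apply fun i _ => ContDiffAt.sum fun j hj => hterm i hj]
  congr 1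
  refine sum_congr rfl fun i _ => ?_
  rw [iteratedFDeriv_fun_sum_apply fun j hj => hterm i hj]
  refine sum_congr rfl fun j hj => ?_
  have hij := (mem_Ioi.mp hj).ne
  rw [← (harmonicAt_log_norm_relPos hz hij).1.iteratedFDeriv_comp_continuousLinearMap,
    ← iteratedFDeriv_const_smul_apply (contDiffAt_log_norm_relPos hz hij)]
  rfl

theorem fderiv_fderiv_vortexH (Γ : Fin n → ℝ) {z : Idx n → ℝ} (hz : Distinct n z)
    (u v : Idx n → ℝ) :
    fderiv ℝ (fderiv ℝ (vortexH n Γ)) z u v = -∑ i, ∑ j ∈ Ioi i, Γ i * Γ j *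
      fderiv ℝ (fderiv ℝ fun w : ℂ => Real.log ‖w‖) (relPos i j z) (relPos i j u)
        (relPos i j v) := by
  calc fderiv ℝ (fderiv ℝ (vortexH n Γ)) z u v = iteratedFDeriv ℝ 2 (vortexH n Γ) z ![u, v] := by
        simp [iteratedFDeriv_two_apply]
    _ = _ := by simp [iteratedFDeriv_vortexH Γ hz, iteratedFDeriv_two_apply]

open Matrix
open scoped Kronecker

theorem Kmat_eq_kronecker : Kmat n = (1 : Matrix (Fin n) (Fin n) ℝ) ⊗ₖ !![0, 1; -1, 0] := by
  ext ⟨k, α⟩ ⟨l, β⟩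
  by_cases h : k = l <;> simp [Kmat, one_apply, h]

theorem Mmat_eq_kronecker (Γ : Fin n → ℝ) :
    Mmat n Γ = diagonal Γ ⊗ₖ (1 : Matrix (Fin 2) (Fin 2) ℝ) := by
  ext ⟨k, α⟩ ⟨l, β⟩
  by_cases h : k = l <;> by_cases h' : α = β <;> simp [Mmat, one_apply, h, h']

theorem Kmat_mul_Kmat : Kmat n * Kmat n = -1 := by
  have hJ : !![(0 : ℝ), 1; -1, 0] * !![0, 1; -1, 0] = (-1 : ℝ) • 1 := by
    ext α β; fin_cases α <;> fin_cases β <;> simp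
  rw [Kmat_eq_kronecker, ← mul_kronecker_mul, one_mul, hJ, kronecker_smul, one_kronecker_one,
    neg_one_smul]

theorem Kmat_transpose : (Kmat n)ᵀ = -Kmat n := by
  have hJ : !![(0 : ℝ), 1; -1, 0]ᵀ = (-1 : ℝ) • !![0, 1; -1, 0] := by
    ext α β; fin_cases α <;> fin_cases β <;> simp
  rw [Kmat_eq_kronecker, ← kroneckerMap_transpose, transpose_one, hJ, kronecker_smul,
    neg_one_smul]

theorem commute_Kmat_Mmat (Γ : Fin n → ℝ) : Commute (Kmat n) (Mmat n Γ) := by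
  rw [Kmat_eq_kronecker, Mmat_eq_kronecker, Commute, SemiconjBy, ← mul_kronecker_mul,
    ← mul_kronecker_mul, one_mul, mul_one, mul_one, one_mul]

theorem relPos_Kmat_mulVec (i j : Fin n) (u : Idx n → ℝ) :
    relPos i j (Kmat n *ᵥ u) = -(I * relPos i j u) := by
  have hK (k : Fin n) (α : Fin 2) :
      (Kmat n *ᵥ u) (k, α) = ∑ β, !![0, 1; -1, 0] α β * u (k, β) := by
    simp [mulVec, dotProduct, Kmat, Fintype.sum_prod_type, ite_mul, Finset.sum_ite_eq]
  apply Complex.ext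
  · simp [relPos_apply, hK, Fin.sum_univ_two]
  · simp [relPos_apply, hK, Fin.sum_univ_two]
    ring

theorem fderiv_fderiv_vortexH_Kmat_mulVec (Γ : Fin n → ℝ) {z : Idx n → ℝ} (hz : Distinct n z)
    (u v : Idx n → ℝ) :
    fderiv ℝ (fderiv ℝ (vortexH n Γ)) z (Kmat n *ᵥ u) (Kmat n *ᵥ v) =
      -fderiv ℝ (fderiv ℝ (vortexH n Γ)) z u v := by
  simp only [fderiv_fderiv_vortexH Γ hz, neg_neg, ← sum_neg_distrib]
  refine sum_congr rfl fun i _ => sum_congr rfl fun j hj => ?_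
  simp only [relPos_Kmat_mulVec, map_neg, _root_.neg_apply, neg_neg, mul_neg,
    (harmonicAt_log_norm_relPos hz (mem_Ioi.mp hj).ne).fderiv_fderiv_I_mul]

theorem D2H_eq_toMatrix₂' (Γ : Fin n → ℝ) {z : Idx n → ℝ} (hz : Distinct n z) :
    D2H n Γ z = LinearMap.toMatrix₂' ℝ (fderiv ℝ (fderiv ℝ (vortexH n Γ)) z).toLinearMap₁₂ := by
  ext a b
  exact fderiv_fderiv_apply_of_differentiableAt
    (((contDiffAt_vortexH Γ hz).fderiv_right (m := 1) le_rfl).differentiableAt one_ne_zero) _ _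

theorem Kmat_mul_D2H_mul_Kmat (Γ : Fin n → ℝ) {z : Idx n → ℝ} (hz : Distinct n z) :
    Kmat n * D2H n Γ z * Kmat n = D2H n Γ z := by
  set B := (fderiv ℝ (fderiv ℝ (vortexH n Γ)) z).toLinearMap₁₂
  have hconj : Kmat n * LinearMap.toMatrix₂' ℝ B * Kmat n =
      LinearMap.toMatrix₂' ℝ (B.compl₁₂ (toLin' (Kmat n)ᵀ) (toLin' (Kmat n))) := by
    rw [LinearMap.toMatrix₂'_compl₁₂, LinearMap.toMatrix'_toLin', LinearMap.toMatrix'_toLin',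
      transpose_transpose]
  rw [D2H_eq_toMatrix₂' Γ hz, hconj]
  congr 1
  refine LinearMap.ext₂ fun u v => ?_
  simp [B, Kmat_transpose, fderiv_fderiv_vortexH_Kmat_mulVec Γ hz]

end Vortex

theorem charpolys_even_general (n : ℕ) (Γ : Fin n → ℝ)
    (z : Idx n → ℝ) (hz : Distinct n z) :
    (∀ x : ℝ, ((D2H n Γ z).charpoly).eval x = ((D2H n Γ z).charpoly).eval (-x)) ∧
    (∀ x : ℝ, (((Mmat n Γ)⁻¹ * D2H n Γ z).charpoly).eval x
      = (((Mmat n Γ)⁻¹ * D2H n Γ z).charpoly).eval (-x)) := by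
  have hcard : Even (Fintype.card (Idx n)) := by simp
  have hK : IsUnit (Kmat n) :=
    IsUnit.of_mul_eq_one (-Kmat n) (by rw [mul_neg, Kmat_mul_Kmat, neg_neg])
  have hKAK := Kmat_mul_D2H_mul_Kmat Γ hz
  have hKMAK : Kmat n * ((Mmat n Γ)⁻¹ * D2H n Γ z) * Kmat n = (Mmat n Γ)⁻¹ * D2H n Γ z := by
    rw [← mul_assoc, (Matrix.commute_inv_right hK (commute_Kmat_Mmat Γ)).eq, mul_assoc, mul_assoc,
      ← mul_assoc _ _ (Kmat n), hKAK]
  exact ⟨fun x => (Matrix.charpoly_eval_neg_of_mul_mul_eq hcard Kmat_mul_Kmat hKAK x).symm,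
    fun x => (Matrix.charpoly_eval_neg_of_mul_mul_eq hcard Kmat_mul_Kmat hKMAK x).symm⟩

/-- The characteristic polynomials of `D²H(z)` and `M⁻¹D²H(z)` are even:
`q(λ) = q(-λ)` for all `λ`. -/
theorem charpolys_even (n : ℕ) (hn : 2 ≤ n) (Γ : Fin n → ℝ)
    (hΓ : ∀ i, Γ i ≠ 0) (z : Idx n → ℝ) (hz : Distinct n z) :
    (∀ x : ℝ, ((D2H n Γ z).charpoly).eval x = ((D2H n Γ z).charpoly).eval (-x)) ∧
    (∀ x : ℝ, (((Mmat n Γ)⁻¹ * D2H n Γ z).charpoly).eval x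
      = (((Mmat n Γ)⁻¹ * D2H n Γ z).charpoly).eval (-x)) :=
  charpolys_even_general n Γ z hz
end
end
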